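/- arXiv:2002.03799 — 2 statements merged into one kernel-verified Lean document; each statement's English description precedes it below -/
import Mathlib

section
/- Let p be an odd prime and let L be a finite extension of ℚ_p with absolute ramification index at least 3. If x ∈ L is a uniformizer of L, then x(x−p)(x+1) is a square in L. -/
/-- If L/ℚ_p is finite with absolute ramification index v(p) ≥ 3 and x is a
uniformizer of L, then x(x−p)(x+1) is a square in L. -/
theorem stmt_1 {p : ℕ} [Fact p.Prime] (hp : Odd p)
    {L : Type} [Field L] [Algebra ℚ_[p] L] [FiniteDimensional ℚ_[p] L]
    (v : L → ℤ)
    (hv_mul : ∀ a b : L, a ≠ 0 → b ≠ 0 → v (a * b) = v a + v b)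
    (hv_add : ∀ a b : L, a ≠ 0 → b ≠ 0 → a + b ≠ 0 → min (v a) (v b) ≤ v (a + b))
    (hv_compat : ∀ a : ℚ_[p], a ≠ 0 → v (algebraMap ℚ_[p] L a) = v ((p : L)) * a.valuation)
    (hv_surj : ∀ n : ℤ, ∃ a : L, a ≠ 0 ∧ v a = n)
    (he : 3 ≤ v ((p : L))) (x : L) (hx : v x = 1) :
    ∃ y : L, y ^ 2 = x * (x - (p : L)) * (x + 1) := by
  classical
  haveI : CharZero L := charZero_of_injective_algebraMap (algebraMap ℚ_[p] L).injective
  by_cases hx0 : x = 0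
  · exact ⟨0, by rw [hx0]; ring⟩
  have hpprime : p.Prime := Fact.out
  have hp1 : (1:ℝ) < (p:ℝ) := by exact_mod_cast hpprime.one_lt
  have hp0 : (0:ℝ) < (p:ℝ) := by linarith
  set E : ℝ := ((v ((p:L)) : ℤ) : ℝ) with hEdef
  have hE3 : (3:ℝ) ≤ E := by rw [hEdef]; exact_mod_cast he
  have hE0 : (0:ℝ) < E := by linarith
  -- basic facts about v
  have hv1 : v (1:L) = 0 := by
    have h := hv_mul 1 1 one_ne_zero one_ne_zero
    rw [one_mul] at h; omega
  have hvm1 : v (-1:L) = 0 := by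
    have h := hv_mul (-1) (-1) (by norm_num) (by norm_num)
    rw [neg_mul_neg, one_mul, hv1] at h; omega
  have hvneg : ∀ a : L, a ≠ 0 → v (-a) = v a := fun a ha => by
    have h := hv_mul (-1) a (by norm_num) ha
    rw [neg_one_mul] at h; rw [h, hvm1]; ring
  -- the norm
  set N : L → ℝ := fun a => if a = 0 then 0 else (p:ℝ) ^ (-(v a : ℝ)/E) with hNdef
  have hNz : N 0 = 0 := by simp [hNdef]
  have hNne : ∀ a : L, a ≠ 0 → N a = (p:ℝ) ^ (-(v a : ℝ)/E) := fun a ha => by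
    simp [hNdef, ha]
  have hNpos : ∀ a : L, a ≠ 0 → 0 < N a := fun a ha => by
    rw [hNne a ha]; exact Real.rpow_pos_of_pos hp0 _
  have hNnonneg : ∀ a : L, 0 ≤ N a := fun a => by
    by_cases ha : a = 0
    · rw [ha, hNz]
    · exact (hNpos a ha).le
  have hNeq0 : ∀ a : L, N a = 0 → a = 0 := fun a h => by
    by_contra ha; exact (hNpos a ha).ne' h
  have hNmul : ∀ a b : L, N (a*b) = N a * N b := fun a b => by
    by_cases ha : a = 0
    · simp [ha, hNz]
    by_cases hb : b = 0
    · simp [hb, hNz]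
    rw [hNne _ (mul_ne_zero ha hb), hNne a ha, hNne b hb, hv_mul a b ha hb,
      ← Real.rpow_add hp0]
    congr 1
    push_cast
    ring
  have hNmono : ∀ a b : L, a ≠ 0 → b ≠ 0 → v a ≤ v b → N b ≤ N a := fun a b ha hb h => by
    rw [hNne a ha, hNne b hb]
    apply Real.rpow_le_rpow_of_exponent_le hp1.le
    have h' : (v a : ℝ) ≤ (v b : ℝ) := by exact_mod_cast h
    exact (div_le_div_iff_of_pos_right hE0).mpr (by linarith)
  have hNmax : ∀ a b : L, N (a + b) ≤ max (N a) (N b) := fun a b => by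
    by_cases ha : a = 0
    · rw [ha, zero_add]; exact le_max_right _ _
    by_cases hb : b = 0
    · rw [hb, add_zero]; exact le_max_left _ _
    by_cases hab : a + b = 0
    · rw [hab, hNz]; exact le_max_of_le_left (hNnonneg a)
    have h := hv_add a b ha hb hab
    rcases le_total (v a) (v b) with h' | h'
    · rw [min_eq_left h'] at h
      exact le_max_of_le_left (hNmono a _ ha hab h)
    · rw [min_eq_right h'] at h
      exact le_max_of_le_right (hNmono b _ hb hab h)
  have hNtri : ∀ a b : L, N (a+b) ≤ N a + N b := fun a b =>
    (hNmax a b).trans (max_le (by linarith [hNnonneg b]) (by linarith [hNnonneg a]))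
  have hNneg : ∀ a : L, N (-a) = N a := fun a => by
    by_cases ha : a = 0
    · rw [ha, neg_zero]
    · rw [hNne _ (neg_ne_zero.2 ha), hNne a ha, hvneg a ha]
  have hNone : N 1 = 1 := by
    rw [hNne 1 one_ne_zero, hv1]
    norm_num
  -- compatibility with the p-adic norm
  have hinj := (algebraMap ℚ_[p] L).injective
  have halg : ∀ c : ℚ_[p], c ≠ 0 → N (algebraMap ℚ_[p] L c) = ‖c‖ := fun c hc => by
    have hc' : algebraMap ℚ_[p] L c ≠ 0 := fun h => hc (hinj (by rw [h, map_zero]))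
    rw [hNne _ hc', hv_compat c hc, Padic.norm_eq_zpow_neg_valuation hc,
      ← Real.rpow_intCast (p:ℝ) (-c.valuation)]
    congr 1
    rw [div_eq_iff hE0.ne']
    push_cast
    ring
  -- the normed field structure and completeness
  let nacg : NormedAddCommGroup L :=
    AddGroupNorm.toNormedAddCommGroup ⟨⟨N, hNz, hNtri, hNneg⟩, fun a => hNeq0 a⟩
  letI nf : NormedField L := { nacg, ‹Field L› with norm_mul := hNmul }
  letI : NormedSpace ℚ_[p] L := ⟨fun c a => by
    rw [Algebra.smul_def]
    show N (algebraMap ℚ_[p] L c * a) ≤ ‖c‖ * N a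
    by_cases hc : c = 0
    · simp [hc, hNz]
    · rw [hNmul, halg c hc]⟩
  haveI hcomp : CompleteSpace L := FiniteDimensional.complete ℚ_[p] L
  have hnorm : ∀ a : L, ‖a‖ = N a := fun _ => rfl
  -- set-up : p, δ
  have hpL : (p:L) ≠ 0 := Nat.cast_ne_zero.mpr hpprime.ne_zero
  set δ : ℝ := (p:ℝ) ^ (-(1:ℝ)/E) with hδdef
  have hδ0 : 0 < δ := Real.rpow_pos_of_pos hp0 _
  have hδ1 : δ < 1 := by
    apply Real.rpow_lt_one_of_one_lt_of_neg hp1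
    apply div_neg_of_neg_of_pos (by norm_num) hE0
  have hNx : N x = δ := by
    rw [hNne x hx0, hx, hδdef]
    norm_num
  have hsmall : ∀ a : L, a ≠ 0 → 1 ≤ v a → N a ≤ δ := fun a ha h => by
    rw [← hNx]
    exact hNmono x a hx0 ha (by omega)
  -- the element t with c = 1 + t
  set t : L := x - (p:L) - (p:L) * x⁻¹ with htdef
  have hu0 : (p:L) * x⁻¹ ≠ 0 := mul_ne_zero hpL (inv_ne_zero hx0)
  have hvinv : v x⁻¹ = -1 := by
    have h := hv_mul x x⁻¹ hx0 (inv_ne_zero hx0)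
    rw [mul_inv_cancel₀ hx0, hv1, hx] at h; omega
  have hvu : v ((p:L) * x⁻¹) = v ((p:L)) - 1 := by
    rw [hv_mul _ _ hpL (inv_ne_zero hx0), hvinv]; ring
  have hNt : N t ≤ δ := by
    have h1 : N (x - (p:L)) ≤ δ := by
      rw [sub_eq_add_neg]
      refine (hNmax x (-(p:L))).trans (max_le (le_of_eq hNx) ?_)
      rw [hNneg]
      exact hsmall _ hpL (by omega)
    calc N t ≤ max (N (x - (p:L))) (N (-((p:L)*x⁻¹))) := by
          rw [htdef, sub_eq_add_neg (x - (p:L))]; exact hNmax _ _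
      _ ≤ δ := max_le h1 (by rw [hNneg]; exact hsmall _ hu0 (by omega))
  -- 2 is a unit of norm 1
  have h2L : (2:L) ≠ 0 := two_ne_zero
  have hv2 : v (2:L) = 0 := by
    have hnd : ¬ p ∣ 2 := by
      intro h
      have h2 := (Nat.prime_dvd_prime_iff_eq hpprime Nat.prime_two).mp h
      rw [h2] at hp
      exact (Nat.not_odd_iff_even.mpr even_two) hp
    have hval2 : ((2:ℕ):ℚ_[p]).valuation = 0 := by
      rw [Padic.valuation_natCast, padicValNat.eq_zero_of_not_dvd hnd]
      norm_num
    have h := hv_compat ((2:ℕ):ℚ_[p]) (by norm_num)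
    rw [hval2, map_natCast] at h
    simpa using h
  have hN2 : N (2:L) = 1 := by
    rw [hNne _ h2L, hv2]
    norm_num
  have hN2i : N ((2:L)⁻¹) = 1 := by
    have h := hNmul (2:L) (2:L)⁻¹
    rw [mul_inv_cancel₀ h2L, hNone, hN2, one_mul] at h
    exact h.symm
  -- the contraction iteration
  set F : L → L := fun z => (t - z^2) * (2:L)⁻¹ with hFdef
  set zs : ℕ → L := fun n => F^[n] 0 with hzdef
  have hz0 : zs 0 = 0 := rfl
  have hzsucc : ∀ n, zs (n+1) = F (zs n) := fun n => Function.iterate_succ_apply' F n 0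
  have hA : ∀ n, N (zs n) ≤ δ := by
    intro n
    induction n with
    | zero => rw [hz0, hNz]; exact hδ0.le
    | succ n ih =>
      rw [hzsucc n]
      calc N ((t - zs n^2) * (2:L)⁻¹) = N (t - zs n ^ 2) * N ((2:L)⁻¹) := hNmul _ _
        _ = N (t - zs n^2) := by rw [hN2i, mul_one]
        _ ≤ max (N t) (N (-(zs n^2))) := by rw [sub_eq_add_neg]; exact hNmax _ _
        _ ≤ δ := by
            refine max_le hNt ?_
            rw [hNneg, pow_two, hNmul]
            calc N (zs n) * N (zs n) ≤ δ * 1 :=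
              mul_le_mul ih (ih.trans hδ1.le) (hNnonneg _) hδ0.le
              _ = δ := mul_one δ
  have hB : ∀ n, N (zs (n+1) - zs n) ≤ δ * δ^n := by
    intro n
    induction n with
    | zero =>
      have h1 : zs 1 - zs 0 = t * (2:L)⁻¹ := by
        rw [hzsucc 0, hz0, hFdef]; ring
      rw [h1, hNmul, hN2i, mul_one]
      simpa using hNt
    | succ n ih =>
      have key : zs (n+2) - zs (n+1) = (zs n - zs (n+1)) * (zs n + zs (n+1)) * (2:L)⁻¹ := by
        rw [hzsucc (n+1), hzsucc n, hFdef]; ring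
      rw [key, hNmul, hN2i, mul_one, hNmul]
      have h1 : N (zs n - zs (n+1)) ≤ δ * δ^n := by
        rw [← hNneg, neg_sub]; exact ih
      have h2 : N (zs n + zs (n+1)) ≤ δ := (hNmax _ _).trans (max_le (hA n) (hA (n+1)))
      calc N (zs n - zs (n+1)) * N (zs n + zs (n+1)) ≤ (δ * δ^n) * δ :=
            mul_le_mul h1 h2 (hNnonneg _) (by positivity)
        _ = δ * δ^(n+1) := by ring
  have hcauchy : CauchySeq zs := by
    apply cauchySeq_of_le_geometric δ δ hδ1
    intro n
    rw [dist_eq_norm, hnorm, ← hNneg, neg_sub]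
    exact hB n
  obtain ⟨w, hw⟩ := cauchySeq_tendsto_of_complete hcauchy
  have hFcont : Continuous F := by
    rw [hFdef]
    exact (continuous_const.sub (continuous_pow 2)).mul continuous_const
  have hFw : F w = w := by
    have h1 : Filter.Tendsto (fun n => zs (n+1)) Filter.atTop (nhds w) :=
      hw.comp (Filter.tendsto_add_atTop_nat 1)
    have h2 : Filter.Tendsto (fun n => F (zs n)) Filter.atTop (nhds (F w)) :=
      (hFcont.tendsto w).comp hw
    have h3 : (fun n => zs (n+1)) = fun n => F (zs n) := funext hzsucc
    rw [h3] at h1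
    exact tendsto_nhds_unique h2 h1
  -- conclusion
  have hFw' : (t - w^2) * (2:L)⁻¹ = w := hFw
  have h2w : (2:L) * w = t - w^2 := by
    calc (2:L) * w = (t - w^2) * (2:L)⁻¹ * 2 := by rw [hFw']; ring
      _ = t - w^2 := by field_simp
  refine ⟨x * (1 + w), ?_⟩
  have hsq : (x * (1+w))^2 = x^2 * (1 + (2*w + w^2)) := by ring
  have h2w' : (2:L)*w + w^2 = t := by rw [h2w]; ring
  rw [hsq, h2w', htdef]
  field_simp
  ring
end

section
/- Let E : y² = x(x−p)(x+1) over ℚ_p with p odd, and let L/ℚ_p be finite with v_L(p) ≥ 3. Then E(L) contains a point (x₀, y₀) with x₀ any given uniformizer of L. -/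
open Filter

/-- Square roots of units congruent to 1 exist in finite extensions of `ℚ_p`, `p` odd. -/
theorem aux_sqrt {p : ℕ} [Fact p.Prime] (hp : Odd p) {L : Type} [Field L] [Algebra ℚ_[p] L]
    [FiniteDimensional ℚ_[p] L] (v : L → ℤ)
    (hv_mul : ∀ a b : L, a ≠ 0 → b ≠ 0 → v (a * b) = v a + v b)
    (hv_add : ∀ a b : L, a ≠ 0 → b ≠ 0 → a + b ≠ 0 → min (v a) (v b) ≤ v (a + b))
    (hv_compat : ∀ a : ℚ_[p], a ≠ 0 → v (algebraMap ℚ_[p] L a) = v ((p : L)) * a.valuation)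
    (he : 3 ≤ v ((p : L))) (t : L) (ht : t = 0 ∨ 1 ≤ v t) :
    ∃ s : L, s ^ 2 = 1 + t := by
  classical
  have hprime : p.Prime := Fact.out
  have hp1R : (1 : ℝ) < (p : ℝ) := by exact_mod_cast hprime.one_lt
  have hppos : (0 : ℝ) < (p : ℝ) := lt_trans zero_lt_one hp1R
  -- basic valuation lemmas
  have hv1 : v 1 = 0 := by
    have h := hv_mul 1 1 one_ne_zero one_ne_zero
    rw [mul_one] at h; linarith
  have hvneg1 : v (-1 : L) = 0 := by
    have h := hv_mul (-1) (-1) (neg_ne_zero.mpr one_ne_zero) (neg_ne_zero.mpr one_ne_zero)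
    rw [neg_mul_neg, one_mul, hv1] at h; linarith
  have hvneg : ∀ a : L, a ≠ 0 → v (-a) = v a := by
    intro a ha
    have h := hv_mul (-1) a (neg_ne_zero.mpr one_ne_zero) ha
    rw [neg_one_mul, hvneg1] at h; linarith
  have hvinv : ∀ a : L, a ≠ 0 → v a⁻¹ = -v a := by
    intro a ha
    have h := hv_mul a a⁻¹ ha (inv_ne_zero ha)
    rw [mul_inv_cancel₀ ha, hv1] at h; linarith
  -- the predicate "v x ≥ m or x = 0"
  set P : ℤ → L → Prop := fun m x => x = 0 ∨ m ≤ v x with hPdef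
  have Pmul : ∀ (m k : ℤ) (a b : L), P m a → P k b → P (m + k) (a * b) := by
    intro m k a b ha hb
    rcases ha with ha | ha
    · exact Or.inl (by rw [ha, zero_mul])
    rcases hb with hb | hb
    · exact Or.inl (by rw [hb, mul_zero])
    by_cases ha0 : a = 0
    · exact Or.inl (by rw [ha0, zero_mul])
    by_cases hb0 : b = 0
    · exact Or.inl (by rw [hb0, mul_zero])
    exact Or.inr (by rw [hv_mul a b ha0 hb0]; omega)
  have Padd : ∀ (m : ℤ) (a b : L), P m a → P m b → P m (a + b) := by
    intro m a b ha hb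
    rcases ha with ha | ha
    · rw [ha, zero_add]; exact hb
    rcases hb with hb | hb
    · rw [hb, add_zero]; exact Or.inr ha
    by_cases ha0 : a = 0
    · rw [ha0, zero_add]; exact Or.inr hb
    by_cases hb0 : b = 0
    · rw [hb0, add_zero]; exact Or.inr ha
    by_cases hab : a + b = 0
    · exact Or.inl hab
    · exact Or.inr (le_trans (le_min ha hb) (hv_add a b ha0 hb0 hab))
  have Pneg : ∀ (m : ℤ) (a : L), P m a → P m (-a) := by
    intro m a ha
    rcases ha with ha | ha
    · exact Or.inl (by rw [ha, neg_zero])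
    by_cases ha0 : a = 0
    · exact Or.inl (by rw [ha0, neg_zero])
    · exact Or.inr (by rw [hvneg a ha0]; exact ha)
  have Pmono : ∀ (m m' : ℤ) (a : L), m' ≤ m → P m a → P m' a := by
    intro m m' a hmm ha
    rcases ha with ha | ha
    · exact Or.inl ha
    · exact Or.inr (le_trans hmm ha)
  -- v 2 = 0
  have h2Q : (2 : ℚ_[p]) ≠ 0 := two_ne_zero
  have hval2 : (2 : ℚ_[p]).valuation = 0 := by
    have h := Padic.valuation_natCast (p := p) 2
    have hnd : ¬ (p ∣ 2) := by
      intro hdvd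
      have := (Nat.prime_dvd_prime_iff_eq hprime Nat.prime_two).mp hdvd
      rw [this] at hp
      exact (Nat.not_odd_iff_even.mpr even_two) hp
    rw [padicValNat.eq_zero_of_not_dvd hnd] at h
    simpa using h
  have h2L : (2 : L) = algebraMap ℚ_[p] L 2 := by
    rw [map_ofNat]
  have h2ne : (2 : L) ≠ 0 := by
    rw [h2L]
    simp only [ne_eq, map_eq_zero]
    exact h2Q
  have hv2 : v (2 : L) = 0 := by
    rw [h2L, hv_compat 2 h2Q, hval2, mul_zero]
  -- unit lemma
  have hUnit : ∀ s y : L, P 1 s → y ^ 2 = 1 + s → y ≠ 0 ∧ v y = 0 := by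
    intro s y hs hy
    have h1s : (1 : L) + s ≠ 0 := by
      intro h0
      have hs1 : s = -1 := by
        have := eq_neg_of_add_eq_zero_right h0
        simpa using this
      rw [hs1] at hs
      rcases hs with h | h
      · exact one_ne_zero (neg_eq_zero.mp h)
      · rw [hvneg1] at h; omega
    have hyne : y ≠ 0 := by
      intro h0; rw [h0] at hy; simp at hy; exact h1s (by rw [← hy])
    have hv2y : v (y ^ 2) = 2 * v y := by
      rw [sq, hv_mul y y hyne hyne]; ring
    have hvy : v ((1 : L) + s) = 0 := by
      by_cases hs0 : s = 0
      · rw [hs0, add_zero, hv1]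
      have hs1 : 1 ≤ v s := by
        rcases hs with h | h
        · exact absurd h hs0
        · exact h
      have hge : (0 : ℤ) ≤ v (1 + s) := by
        have := hv_add 1 s one_ne_zero hs0 h1s
        rw [hv1] at this; omega
      have hle : v (1 + s) ≤ 0 := by
        have heq : (1 : L) = (1 + s) + (-s) := by ring
        have h := hv_add (1 + s) (-s) h1s (neg_ne_zero.mpr hs0) (by rw [← heq]; exact one_ne_zero)
        rw [← heq, hv1, hvneg s hs0] at h
        omega
      omega
    refine ⟨hyne, ?_⟩
    rw [hy, hvy] at hv2y
    omega
  -- Newton iteration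
  set u : L := 1 + t with hu_def
  let Y : ℕ → L := fun n => Nat.rec (1 : L) (fun _ yn => (yn ^ 2 + u) / (2 * yn)) n
  have hY0 : Y 0 = 1 := rfl
  have hYs : ∀ n, Y (n + 1) = (Y n ^ 2 + u) / (2 * Y n) := fun n => rfl
  have hPt : P 1 t := ht
  have key : ∀ n : ℕ, Y n ≠ 0 ∧ v (Y n) = 0 ∧ P ((n : ℤ) + 1) (Y n ^ 2 - u) := by
    intro n
    induction n with
    | zero =>
      refine ⟨one_ne_zero, hv1, ?_⟩
      have h0 : Y 0 ^ 2 - u = -t := by rw [hY0, hu_def]; ring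
      rw [h0]
      simpa using Pneg 1 t hPt
    | succ n ih =>
      obtain ⟨hyn, hvyn, hd⟩ := ih
      have h2y : (2 : L) * Y n ≠ 0 := mul_ne_zero h2ne hyn
      have hstep : Y (n + 1) ^ 2 - u = (Y n ^ 2 - u) ^ 2 / (2 * Y n) ^ 2 := by
        rw [hYs]; field_simp; ring
      have hPd2 : P ((n : ℤ) + 2) (Y (n + 1) ^ 2 - u) := by
        by_cases hd0 : Y n ^ 2 - u = 0
        · left; rw [hstep, hd0]; simp
        · right
          have hvd : (n : ℤ) + 1 ≤ v (Y n ^ 2 - u) := hd.resolve_left hd0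
          have hv2yn : v (2 * Y n) = 0 := by rw [hv_mul _ _ h2ne hyn, hv2, hvyn]; ring
          have hq : v ((Y n ^ 2 - u) ^ 2 / (2 * Y n) ^ 2) = 2 * v (Y n ^ 2 - u) := by
            rw [div_eq_mul_inv, hv_mul _ _ (pow_ne_zero 2 hd0) (inv_ne_zero (pow_ne_zero 2 h2y)),
              hvinv _ (pow_ne_zero 2 h2y), sq (Y n ^ 2 - u), hv_mul _ _ hd0 hd0,
              sq (2 * Y n), hv_mul _ _ h2y h2y, hv2yn]
            ring
          rw [hstep, hq]; omega
      have hy1 : Y (n + 1) ^ 2 = 1 + (t + (Y (n + 1) ^ 2 - u)) := by rw [hu_def]; ring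
      obtain ⟨hne, hv0⟩ :=
        hUnit _ _ (Padd 1 _ _ hPt (Pmono _ 1 _ (by omega) hPd2)) hy1
      refine ⟨hne, hv0, ?_⟩
      have hcast : ((n + 1 : ℕ) : ℤ) + 1 = (n : ℤ) + 2 := by push_cast; ring
      rw [hcast]
      exact hPd2
  have hdiff : ∀ n : ℕ, P ((n : ℤ) + 1) (Y (n + 1) - Y n) := by
    intro n
    obtain ⟨hyn, hvyn, hd⟩ := key n
    have h2y : (2 : L) * Y n ≠ 0 := mul_ne_zero h2ne hyn
    have heq : Y (n + 1) - Y n = -(Y n ^ 2 - u) / (2 * Y n) := by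
      rw [hYs]; field_simp; ring
    by_cases hd0 : Y n ^ 2 - u = 0
    · left; rw [heq, hd0]; simp
    · right
      have hvd := hd.resolve_left hd0
      have hv2yn : v (2 * Y n) = 0 := by rw [hv_mul _ _ h2ne hyn, hv2, hvyn]; ring
      rw [heq, div_eq_mul_inv, hv_mul _ _ (neg_ne_zero.mpr hd0) (inv_ne_zero h2y),
        hvneg _ hd0, hvinv _ h2y, hv2yn]
      omega
  -- the norm induced by v
  set e : ℤ := v ((p : L)) with he_def
  have hepos : (0 : ℤ) < e := by omega
  have heR : (0 : ℝ) < (e : ℝ) := by exact_mod_cast hepos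
  set r : ℝ := (p : ℝ) ^ (-(e : ℝ)⁻¹) with hr_def
  have hr0 : 0 < r := Real.rpow_pos_of_pos hppos _
  have hr1 : r < 1 :=
    Real.rpow_lt_one_of_one_lt_of_neg hp1R (neg_lt_zero.mpr (inv_pos.mpr heR))
  have hrz : ∀ m : ℤ, r ^ m = (p : ℝ) ^ (-(e : ℝ)⁻¹ * (m : ℝ)) := by
    intro m
    rw [hr_def, ← Real.rpow_intCast ((p : ℝ) ^ (-(e : ℝ)⁻¹)) m, ← Real.rpow_mul hppos.le]
  set N : L → ℝ := fun x => if x = 0 then 0 else r ^ (v x) with hN_def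
  have hN0 : N 0 = 0 := if_pos rfl
  have hNne : ∀ x : L, x ≠ 0 → N x = r ^ (v x) := fun x hx => if_neg hx
  have hNpos : ∀ x : L, x ≠ 0 → 0 < N x := fun x hx => by
    rw [hNne x hx]; exact zpow_pos hr0 _
  have hNnonneg : ∀ x : L, 0 ≤ N x := by
    intro x
    by_cases hx : x = 0
    · rw [hx, hN0]
    · exact (hNpos x hx).le
  have hNmul : ∀ a b : L, N (a * b) = N a * N b := by
    intro a b
    by_cases ha : a = 0
    · rw [ha, zero_mul, hN0, zero_mul]
    by_cases hb : b = 0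
    · rw [hb, mul_zero, hN0, mul_zero]
    rw [hNne _ (mul_ne_zero ha hb), hNne _ ha, hNne _ hb, hv_mul a b ha hb,
      zpow_add₀ hr0.ne']
  have hNneg : ∀ a : L, N (-a) = N a := by
    intro a
    by_cases ha : a = 0
    · rw [ha, neg_zero]
    · rw [hNne _ (neg_ne_zero.mpr ha), hNne _ ha, hvneg a ha]
  have hNmax : ∀ a b : L, N (a + b) ≤ max (N a) (N b) := by
    intro a b
    by_cases ha : a = 0
    · rw [ha, zero_add]; exact le_max_right _ _
    by_cases hb : b = 0
    · rw [hb, add_zero]; exact le_max_left _ _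
    by_cases hab : a + b = 0
    · rw [hab, hN0]; exact le_max_of_le_left (hNnonneg a)
    rw [hNne _ hab, hNne _ ha, hNne _ hb]
    have hmin := hv_add a b ha hb hab
    rcases min_le_iff.mp (le_refl (min (v a) (v b))) with h | h
    all_goals {
      rcases le_total (v a) (v b) with hle | hle
      · refine le_max_of_le_left ?_
        refine zpow_le_zpow_right_of_le_one₀ hr0 hr1.le ?_
        omega
      · refine le_max_of_le_right ?_
        refine zpow_le_zpow_right_of_le_one₀ hr0 hr1.le ?_
        omega }
  have hNadd : ∀ a b : L, N (a + b) ≤ N a + N b := by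
    intro a b
    refine le_trans (hNmax a b) (max_le ?_ ?_)
    · exact le_add_of_nonneg_right (hNnonneg b)
    · exact le_add_of_nonneg_left (hNnonneg a)
  have hNalg : ∀ c : ℚ_[p], N (algebraMap ℚ_[p] L c) = ‖c‖ := by
    intro c
    by_cases hc : c = 0
    · rw [hc, map_zero, hN0, norm_zero]
    have halgne : algebraMap ℚ_[p] L c ≠ 0 := by
      simp only [ne_eq, map_eq_zero]; exact hc
    rw [hNne _ halgne, hv_compat c hc, hrz,
      Padic.norm_eq_zpow_neg_valuation hc, ← Real.rpow_intCast (p : ℝ) (-c.valuation)]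
    congr 1
    push_cast
    field_simp
  letI nacg : NormedAddCommGroup L := AddGroupNorm.toNormedAddCommGroup
    { toFun := N
      map_zero' := hN0
      add_le' := hNadd
      neg' := hNneg
      eq_zero_of_map_eq_zero' := fun x hx => by
        by_contra h
        exact (hNpos x h).ne' hx }
  have hnorm_eq : ∀ x : L, ‖x‖ = N x := fun x => rfl
  letI nf : NormedField L :=
    { nacg, (inferInstance : Field L) with
      norm_mul := hNmul }
  letI ns : NormedSpace ℚ_[p] L :=
    { (inferInstance : Module ℚ_[p] L) with
      norm_smul_le := fun c x => by
        rw [Algebra.smul_def, hnorm_eq, hNmul, hNalg, hnorm_eq] }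
  haveI : CompleteSpace L := FiniteDimensional.complete ℚ_[p] L
  have hnormP : ∀ (m : ℕ) (z : L), P ((m : ℤ)) z → ‖z‖ ≤ r ^ m := by
    intro m z hz
    rw [hnorm_eq]
    rcases hz with hz | hz
    · rw [hz, hN0]; positivity
    by_cases hz0 : z = 0
    · rw [hz0, hN0]; positivity
    rw [hNne _ hz0, ← zpow_natCast r m]
    exact zpow_le_zpow_right_of_le_one₀ hr0 hr1.le hz
  have hcauchy : CauchySeq Y := by
    apply cauchySeq_of_le_geometric r 1 hr1
    intro n
    rw [dist_eq_norm]
    have h1 : ‖Y n - Y (n + 1)‖ = ‖Y (n + 1) - Y n‖ := by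
      rw [← norm_neg]; congr 1; ring
    have h2 : ‖Y (n + 1) - Y n‖ ≤ r ^ (n + 1) := by
      refine hnormP (n + 1) _ ?_
      have := hdiff n
      have hcast : ((n : ℤ) + 1) = ((n + 1 : ℕ) : ℤ) := by push_cast; ring
      rwa [hcast] at this
    rw [h1]
    calc ‖Y (n + 1) - Y n‖ ≤ r ^ (n + 1) := h2
      _ = r * r ^ n := by ring
      _ ≤ 1 * r ^ n := by nlinarith [pow_nonneg hr0.le n]
  obtain ⟨yL, hyL⟩ := cauchySeq_tendsto_of_complete hcauchy
  have hten1 : Tendsto (fun n => Y n ^ 2 - u) atTop (nhds (yL ^ 2 - u)) :=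
    (hyL.pow 2).sub tendsto_const_nhds
  have hten2 : Tendsto (fun n => Y n ^ 2 - u) atTop (nhds 0) := by
    have hg : Tendsto (fun n : ℕ => r ^ (n + 1)) atTop (nhds 0) := by
      have := (tendsto_pow_atTop_nhds_zero_of_lt_one hr0.le hr1).comp
        (tendsto_add_atTop_nat 1)
      simpa [Function.comp_def] using this
    refine squeeze_zero_norm (fun n => ?_) hg
    refine hnormP (n + 1) _ ?_
    have := (key n).2.2
    have hcast : ((n : ℤ) + 1) = ((n + 1 : ℕ) : ℤ) := by push_cast; ring
    rwa [hcast] at this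
  have hfin : yL ^ 2 - u = 0 := tendsto_nhds_unique hten1 hten2
  exact ⟨yL, by rw [hu_def] at hfin; rw [sub_eq_zero] at hfin; exact hfin⟩

/-- Let E : y² = x(x−p)(x+1) over ℚ_p with p odd, and L/ℚ_p finite with
v(p) ≥ 3. Then for any uniformizer x₀ of L there is y₀ ∈ L with (x₀, y₀) ∈ E(L). -/
theorem stmt_11 {p : ℕ} [Fact p.Prime] (hp : Odd p)
    {L : Type} [Field L] [Algebra ℚ_[p] L] [FiniteDimensional ℚ_[p] L]
    (v : L → ℤ)
    (hv_mul : ∀ a b : L, a ≠ 0 → b ≠ 0 → v (a * b) = v a + v b)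
    (hv_add : ∀ a b : L, a ≠ 0 → b ≠ 0 → a + b ≠ 0 → min (v a) (v b) ≤ v (a + b))
    (hv_compat : ∀ a : ℚ_[p], a ≠ 0 → v (algebraMap ℚ_[p] L a) = v ((p : L)) * a.valuation)
    (hv_surj : ∀ n : ℤ, ∃ a : L, a ≠ 0 ∧ v a = n)
    (he : 3 ≤ v ((p : L))) (x₀ : L) (hx₀ : v x₀ = 1) :
    ∃ y₀ : L,
      (((⟨0, 1 - (p : ℚ_[p]), 0, -(p : ℚ_[p]), 0⟩ :
        WeierstrassCurve ℚ_[p]).baseChange L).toAffine.Equation x₀ y₀) ∧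
      y₀ ^ 2 = x₀ * (x₀ - (p : L)) * (x₀ + 1) := by
  classical
  have hEq : ∀ x y : L, y ^ 2 = x * (x - (p : L)) * (x + 1) →
      (((⟨0, 1 - (p : ℚ_[p]), 0, -(p : ℚ_[p]), 0⟩ :
        WeierstrassCurve ℚ_[p]).baseChange L).toAffine.Equation x y) := by
    intro x y h
    rw [WeierstrassCurve.Affine.equation_iff]
    simp only [WeierstrassCurve.baseChange, WeierstrassCurve.map, map_zero, map_sub, map_one,
      map_natCast, map_neg]
    linear_combination h
  by_cases hx0 : x₀ = 0
  · subst hx0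
    exact ⟨0, hEq 0 0 (by ring), by ring⟩
  -- basic valuation lemmas
  have hv1 : v 1 = 0 := by
    have h := hv_mul 1 1 one_ne_zero one_ne_zero
    rw [mul_one] at h; linarith
  have hvneg1 : v (-1 : L) = 0 := by
    have h := hv_mul (-1) (-1) (neg_ne_zero.mpr one_ne_zero) (neg_ne_zero.mpr one_ne_zero)
    rw [neg_mul_neg, one_mul, hv1] at h; linarith
  have hvneg : ∀ a : L, a ≠ 0 → v (-a) = v a := by
    intro a ha
    have h := hv_mul (-1) a (neg_ne_zero.mpr one_ne_zero) ha
    rw [neg_one_mul, hvneg1] at h; linarith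
  have hvinv : ∀ a : L, a ≠ 0 → v a⁻¹ = -v a := by
    intro a ha
    have h := hv_mul a a⁻¹ ha (inv_ne_zero ha)
    rw [mul_inv_cancel₀ ha, hv1] at h; linarith
  have hpQ : (p : ℚ_[p]) ≠ 0 := Nat.cast_ne_zero.mpr (Fact.out (p := p.Prime)).pos.ne'
  have hpL : (p : L) ≠ 0 := by
    have hcast : (p : L) = algebraMap ℚ_[p] L (p : ℚ_[p]) := (map_natCast _ p).symm
    rw [hcast]
    simp only [ne_eq, map_eq_zero]
    exact hpQ
  -- the element t
  set t : L := x₀ - (p : L) - (p : L) * x₀⁻¹ with ht_def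
  have hQadd : ∀ (a b : L), (a = 0 ∨ 1 ≤ v a) → (b = 0 ∨ 1 ≤ v b) →
      (a + b = 0 ∨ 1 ≤ v (a + b)) := by
    intro a b ha hb
    rcases ha with ha | ha
    · rw [ha, zero_add]; exact hb
    rcases hb with hb | hb
    · rw [hb, add_zero]; exact Or.inr ha
    by_cases ha0 : a = 0
    · rw [ha0, zero_add]; exact Or.inr hb
    by_cases hb0 : b = 0
    · rw [hb0, add_zero]; exact Or.inr ha
    by_cases hab : a + b = 0
    · exact Or.inl hab
    · refine Or.inr (le_trans (le_min ha hb) (hv_add a b ha0 hb0 hab))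
  have ht : t = 0 ∨ 1 ≤ v t := by
    have h1 : (x₀ = 0 ∨ 1 ≤ v x₀) := Or.inr (by omega)
    have h2 : (-(p : L) = 0 ∨ 1 ≤ v (-(p : L))) := by
      right; rw [hvneg _ hpL]; omega
    have h3 : (-((p : L) * x₀⁻¹) = 0 ∨ 1 ≤ v (-((p : L) * x₀⁻¹))) := by
      right
      rw [hvneg _ (mul_ne_zero hpL (inv_ne_zero hx0)),
        hv_mul _ _ hpL (inv_ne_zero hx0), hvinv _ hx0, hx₀]
      omega
    have := hQadd _ _ (hQadd _ _ h1 h2) h3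
    have heq : x₀ + -(p : L) + -((p : L) * x₀⁻¹) = t := by rw [ht_def]; ring
    rwa [heq] at this
  obtain ⟨s, hs⟩ := aux_sqrt hp v hv_mul hv_add hv_compat he t ht
  have hsq : (x₀ * s) ^ 2 = x₀ * (x₀ - (p : L)) * (x₀ + 1) := by
    rw [mul_pow, hs, ht_def]
    field_simp
    ring
  exact ⟨x₀ * s, hEq _ _ hsq, hsq⟩
end
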